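/- Fix i ∈ [n] and j ∈ [u_i+1, v_i], and let b_{i,j} be the tuple in ℤ^n whose t-th entry is u_t for t < i, is j−1 for t = i, and is max{ j + (t−i), u_t } for t > i. Then b_{i,j} ∈ 𝓛, b_{i,j} < a_{i,j}, and every c ∈ 𝓛 with c < a_{i,j} satisfies c ≤ b_{i,j}. Consequently, a_{i,j} covers exactly one element of 𝓛, namely b_{i,j}. -/

import Mathlib

/-!
Strict increase forces `c t ≥ c i + (t - i)` for every `c ∈ 𝓛` and `t ≥ i`, so `a_{i,j}` is the
least element of `𝓛` whose `i`-th entry is at least `j`. Hence every `c < a_{i,j}` has `i`-th entry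
at most `j - 1`, i.e. lies below `b_{i,j}`, which is `a_{i,j}` with its `i`-th entry lowered by one.
-/

namespace LadderPaper

/-- The tuple `a_{i,j}`: entry `t` is `u t` for `t < i` and `max (j + (t - i)) (u t)` for
`t ≥ i` (indices `t ∈ [1,n]`; entries outside `[1,n]` are set to `0`). -/
def atuple (u : ℕ → ℤ) (n i : ℕ) (j : ℤ) : ℕ → ℤ := fun t =>
  if 1 ≤ t ∧ t ≤ n then
    (if t < i then u t else max (j + ((t : ℤ) - (i : ℤ))) (u t))
  else 0

/-- The tuple `b_{i,j}`: like `a_{i,j}` but with `i`-th entry `j - 1`. -/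
def btuple (u : ℕ → ℤ) (n i : ℕ) (j : ℤ) : ℕ → ℤ := fun t =>
  if 1 ≤ t ∧ t ≤ n then
    (if t < i then u t
     else if t = i then j - 1
     else max (j + ((t : ℤ) - (i : ℤ))) (u t))
  else 0

/-- The tuple `(u_1, …, u_n)`. -/
def utuple (u : ℕ → ℤ) (n : ℕ) : ℕ → ℤ := fun t =>
  if 1 ≤ t ∧ t ≤ n then u t else 0

/-- The lattice `𝓛` of tuples `c` with `u t ≤ c t ≤ v t` for `t ∈ [1,n]`, strictly
increasing entries, and (normalization) `c t = 0` outside `[1,n]`.  It carries the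
componentwise (induced product) order. -/
def ladderL (n : ℕ) (u v : ℕ → ℤ) : Set (ℕ → ℤ) :=
  {c | (∀ t, 1 ≤ t → t ≤ n → u t ≤ c t ∧ c t ≤ v t) ∧
       (∀ t, 1 ≤ t → t + 1 ≤ n → c t < c (t + 1)) ∧
       (∀ t, t = 0 ∨ n < t → c t = 0)}

/-- The set `P_𝓛 = { a_{i,j} : i ∈ [n], j ∈ [u_i + 1, v_i] }`. -/
def PL (n : ℕ) (u v : ℕ → ℤ) : Set (ℕ → ℤ) :=
  {x | ∃ i : ℕ, ∃ j : ℤ, 1 ≤ i ∧ i ≤ n ∧ u i + 1 ≤ j ∧ j ≤ v i ∧ x = atuple u n i j}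

/-- The product poset `𝓛 × [r]`. -/
def ladderLr (n : ℕ) (u v : ℕ → ℤ) (r : ℤ) : Set ((ℕ → ℤ) × ℤ) :=
  {p | p.1 ∈ ladderL n u v ∧ 1 ≤ p.2 ∧ p.2 ≤ r}

/-- The set `P_{𝓛×[r]} = { (a_{i,j}, 1) } ∪ { ((u_1,…,u_n), k) : k ∈ [2,r] }`. -/
def PLr (n : ℕ) (u v : ℕ → ℤ) (r : ℤ) : Set ((ℕ → ℤ) × ℤ) :=
  {p | (p.1 ∈ PL n u v ∧ p.2 = 1) ∨ (p.1 = utuple u n ∧ 2 ≤ p.2 ∧ p.2 ≤ r)}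

/-- `ε_i > 1`, with the convention `ε_n > 1` (i.e. `i = n` or `u_{i+1} - u_i > 1`). -/
def epsGt1 (u : ℕ → ℤ) (n i : ℕ) : Prop := i = n ∨ 1 < u (i + 1) - u i

/-- `θ_{i-1} > 1`, with the convention `θ_0 > 1` (i.e. `i = 1` or `v_i - v_{i-1} > 1`). -/
def thetaGt1 (v : ℕ → ℤ) (i : ℕ) : Prop := i = 1 ∨ 1 < v i - v (i - 1)

/-- Membership in `C = { i ∈ [n-1] : v_i < u_{i+1} } ∪ { n }`. -/
def inC (n : ℕ) (u v : ℕ → ℤ) (i : ℕ) : Prop :=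
  (1 ≤ i ∧ i + 1 ≤ n ∧ v i < u (i + 1)) ∨ i = n

/-- The set `C = { i ∈ [n-1] : v_i < u_{i+1} } ∪ { n }`. -/
def Cset (n : ℕ) (u v : ℕ → ℤ) : Set ℕ :=
  {i | 1 ≤ i ∧ i + 1 ≤ n ∧ v i < u (i + 1)} ∪ {n}

/-- `[p,q]` is one of the blocks `[p_s, q_s]` determined by `C`: `q ∈ C`,
no element of `C` lies in `[p, q-1]`, and either `p = 1` or `p - 1 ∈ C`. -/
def IsBlock (n : ℕ) (u v : ℕ → ℤ) (p q : ℕ) : Prop :=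
  1 ≤ p ∧ p ≤ q ∧ q ≤ n ∧ inC n u v q ∧
    (∀ j, p ≤ j → j < q → ¬ inC n u v j) ∧ (p = 1 ∨ inC n u v (p - 1))

/-- `i0 = min { i ∈ [p,q] : ε_i > 1 }` (with the convention `ε_n > 1`). -/
def IsBlockMin (n : ℕ) (u : ℕ → ℤ) (p q i0 : ℕ) : Prop :=
  p ≤ i0 ∧ i0 ≤ q ∧ epsGt1 u n i0 ∧ ∀ j, p ≤ j → j < i0 → ¬ epsGt1 u n j

/-- The comparability graph of a poset: two distinct elements are adjacent
iff they are comparable. -/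
def compGraph (α : Type*) [Preorder α] : SimpleGraph α where
  Adj x y := x ≠ y ∧ (x ≤ y ∨ y ≤ x)
  symm := ⟨fun x y h => ⟨Ne.symm h.1, Or.symm h.2⟩⟩
  loopless := ⟨fun x h => h.1 rfl⟩

/-- A poset is pure if all of its maximal chains have the same cardinality
(equivalently, the same length). -/
def IsPure (α : Type*) [Preorder α] : Prop :=
  ∀ A B : Set α, IsMaxChain (· ≤ ·) A → IsMaxChain (· ≤ ·) B → A.ncard = B.ncard

theorem covBy_iff_eq_of_forall_lt_le {α : Type*} [PartialOrder α] {a b c : α} (hba : b < a)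
    (hmax : ∀ d < a, d ≤ b) : c ⋖ a ↔ c = b := by
  refine ⟨fun hca => ?_, fun hcb => hcb ▸ ⟨hba, fun d hbd hda => (hmax d hda).not_gt hbd⟩⟩
  by_contra hne
  exact hca.2 (lt_of_le_of_ne (hmax c hca.lt) hne) hba

theorem add_sub_le_of_lt_succ {w : ℕ → ℤ} {n : ℕ}
    (hw : ∀ t, 1 ≤ t → t + 1 ≤ n → w t < w (t + 1)) {s t : ℕ} (hs : 1 ≤ s) (hst : s ≤ t)
    (htn : t ≤ n) : w s + ((t : ℤ) - s) ≤ w t := by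
  induction t, hst using Nat.le_induction with
  | base => simp
  | succ t hst ih =>
    have := hw t (by omega) htn
    push_cast
    linarith [ih (by omega)]

section Entries

variable {u : ℕ → ℤ} {n i t : ℕ} {j : ℤ}

theorem atuple_of_lt (ht : 1 ≤ t) (htn : t ≤ n) (hti : t < i) : atuple u n i j t = u t := by
  simp [atuple, ht, htn, hti]

theorem atuple_of_le (ht : 1 ≤ t) (htn : t ≤ n) (hit : i ≤ t) :
    atuple u n i j t = max (j + ((t : ℤ) - i)) (u t) := by
  simp [atuple, ht, htn, hit.not_gt]

theorem atuple_of_not_mem (ht : t = 0 ∨ n < t) : atuple u n i j t = 0 := by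
  simp only [atuple]
  rw [if_neg (by omega)]

theorem atuple_self (hi : 1 ≤ i) (hin : i ≤ n) (hj : u i ≤ j) : atuple u n i j i = j := by
  simp [atuple_of_le hi hin le_rfl, hj]

theorem btuple_eq_update (hi : 1 ≤ i) (hin : i ≤ n) :
    btuple u n i j = Function.update (atuple u n i j) i (j - 1) := by
  funext t
  rcases eq_or_ne t i with rfl | hti
  · simp [btuple, hi, hin]
  · simp [btuple, atuple, hti]

theorem btuple_self (hi : 1 ≤ i) (hin : i ≤ n) : btuple u n i j i = j - 1 := by
  simp [btuple_eq_update hi hin]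

theorem btuple_of_ne (hi : 1 ≤ i) (hin : i ≤ n) (hti : t ≠ i) :
    btuple u n i j t = atuple u n i j t := by
  simp [btuple_eq_update hi hin, hti]

end Entries

section Ladder

variable {n : ℕ} {u v : ℕ → ℤ} {i : ℕ} {j : ℤ}

theorem atuple_le_of_le_apply {c : ℕ → ℤ} (hc : c ∈ ladderL n u v) (hi : 1 ≤ i)
    (hj : j ≤ c i) : atuple u n i j ≤ c := by
  obtain ⟨hbounds, hmono, hzero⟩ := hc
  intro t
  by_cases htn : 1 ≤ t ∧ t ≤ n
  · obtain ⟨ht, htn⟩ := htn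
    rcases lt_or_ge t i with hti | hit
    · exact atuple_of_lt ht htn hti ▸ (hbounds t ht htn).1
    · rw [atuple_of_le ht htn hit]
      have := add_sub_le_of_lt_succ hmono hi hit htn
      exact max_le (by linarith) (hbounds t ht htn).1
  · rw [atuple_of_not_mem (by omega), hzero t (by omega)]

theorem le_btuple_of_lt_atuple {c : ℕ → ℤ} (hc : c ∈ ladderL n u v) (hi : 1 ≤ i)
    (hin : i ≤ n) (hlt : c < atuple u n i j) : c ≤ btuple u n i j := by
  rw [btuple_eq_update hi hin, le_update_iff]
  refine ⟨?_, fun t _ => hlt.le t⟩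
  by_contra! hci
  exact hlt.not_ge (atuple_le_of_le_apply hc hi (by omega))

theorem btuple_lt_atuple (hi : 1 ≤ i) (hin : i ≤ n) (hj : u i ≤ j) :
    btuple u n i j < atuple u n i j := by
  rw [btuple_eq_update hi hin, update_lt_self_iff, atuple_self hi hin hj]
  omega

theorem btuple_mem_ladderL (humono : ∀ t, 1 ≤ t → t + 1 ≤ n → u t < u (t + 1))
    (hvmono : ∀ t, 1 ≤ t → t + 1 ≤ n → v t < v (t + 1))
    (huv : ∀ t, 1 ≤ t → t ≤ n → u t < v t) (hi : 1 ≤ i) (hin : i ≤ n) (hj1 : u i + 1 ≤ j)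
    (hj2 : j ≤ v i) : btuple u n i j ∈ ladderL n u v := by
  refine ⟨fun t ht htn => ?_, fun t ht htn => ?_, fun t ht => ?_⟩
  · rcases lt_trichotomy t i with hti | rfl | hit
    · rw [btuple_of_ne hi hin hti.ne, atuple_of_lt ht htn hti]
      exact ⟨le_rfl, (huv t ht htn).le⟩
    · rw [btuple_self hi hin]
      omega
    · rw [btuple_of_ne hi hin hit.ne', atuple_of_le ht htn hit.le]
      have := add_sub_le_of_lt_succ hvmono hi hit.le htn
      exact ⟨le_max_right _ _, max_le (by linarith) (huv t ht htn).le⟩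
  · have hut := humono t ht htn
    rcases lt_trichotomy (t + 1) i with hti | rfl | hit
    · rw [btuple_of_ne hi hin (by omega), btuple_of_ne hi hin hti.ne,
        atuple_of_lt ht (by omega) (by omega), atuple_of_lt (by omega) htn hti]
      exact hut
    · rw [btuple_of_ne hi hin (by omega), atuple_of_lt ht (by omega) (by omega),
        btuple_self hi hin]
      omega
    · rw [btuple_of_ne (t := t + 1) hi hin (by omega), atuple_of_le (by omega) htn (by omega)]
      rcases eq_or_lt_of_le (Nat.le_of_lt_succ hit) with rfl | hit
      · rw [btuple_self hi hin]
        exact lt_max_of_lt_left (by push_cast; omega)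
      · rw [btuple_of_ne hi hin hit.ne', atuple_of_le ht (by omega) hit.le]
        push_cast
        exact max_lt_max (by linarith) hut
  · rw [btuple_of_ne hi hin (by omega), atuple_of_not_mem ht]

end Ladder

theorem stmt2_general
    (n : ℕ) (u v : ℕ → ℤ)
    (humono : ∀ i, 1 ≤ i → i + 1 ≤ n → u i < u (i + 1))
    (hvmono : ∀ i, 1 ≤ i → i + 1 ≤ n → v i < v (i + 1))
    (huv : ∀ i, 1 ≤ i → i ≤ n → u i < v i)
    (i : ℕ) (j : ℤ) (hi1 : 1 ≤ i) (hin : i ≤ n) (hj1 : u i + 1 ≤ j) (hj2 : j ≤ v i) :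
    btuple u n i j ∈ ladderL n u v ∧
    btuple u n i j < atuple u n i j ∧
    (∀ c ∈ ladderL n u v, c < atuple u n i j → c ≤ btuple u n i j) ∧
    (∀ x : ↥(ladderL n u v), (x : ℕ → ℤ) = atuple u n i j →
      ∀ y : ↥(ladderL n u v), (y ⋖ x ↔ (y : ℕ → ℤ) = btuple u n i j)) := by
  have hbL := btuple_mem_ladderL humono hvmono huv hi1 hin hj1 hj2
  have hba := btuple_lt_atuple (u := u) hi1 hin (by omega : u i ≤ j)
  have hmax : ∀ c ∈ ladderL n u v, c < atuple u n i j → c ≤ btuple u n i j :=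
    fun c hc => le_btuple_of_lt_atuple hc hi1 hin
  refine ⟨hbL, hba, hmax, fun x hx y => ?_⟩
  have hbx : (⟨_, hbL⟩ : ladderL n u v) < x := by rw [← Subtype.coe_lt_coe, hx]; exact hba
  rw [covBy_iff_eq_of_forall_lt_le hbx fun c hc => hmax c c.2 (hx ▸ hc), Subtype.ext_iff]

theorem stmt2
    (n m : ℕ) (u v : ℕ → ℤ)
    (hn : 1 ≤ n) (hnm : n < m)
    (hu1 : u 1 = 1)
    (humono : ∀ i, 1 ≤ i → i + 1 ≤ n → u i < u (i + 1))
    (hum : u n < (m : ℤ))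
    (hv1 : 1 < v 1)
    (hvmono : ∀ i, 1 ≤ i → i + 1 ≤ n → v i < v (i + 1))
    (hvn : v n = (m : ℤ))
    (huv : ∀ i, 1 ≤ i → i ≤ n → u i < v i)
    (hstep : ∀ i, 1 ≤ i → i + 1 ≤ n → u (i + 1) ≤ v i + 1)
    (i : ℕ) (j : ℤ) (hi1 : 1 ≤ i) (hin : i ≤ n) (hj1 : u i + 1 ≤ j) (hj2 : j ≤ v i) :
    btuple u n i j ∈ ladderL n u v ∧
    btuple u n i j < atuple u n i j ∧
    (∀ c ∈ ladderL n u v, c < atuple u n i j → c ≤ btuple u n i j) ∧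
    (∀ x : ↥(ladderL n u v), (x : ℕ → ℤ) = atuple u n i j →
      ∀ y : ↥(ladderL n u v), (y ⋖ x ↔ (y : ℕ → ℤ) = btuple u n i j)) :=
  stmt2_general n u v humono hvmono huv i j hi1 hin hj1 hj2

end LadderPaper
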